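/- Let X be a chain and let α, β be orientation-preserving full transformations of X. Then α and β are J-related in the monoid OP(X) (i.e. there exist λ, γ, δ, ξ ∈ OP(X) with α = λβγ and β = δαξ, composition written left-to-right with the left factor applied first) if and only if there exist injective mappings θ : Im(α) → Im(β) and τ : Im(β) → Im(α) both admitting completable inverses in OP(X) (i.e. θ⁻¹ : θ(Im(α)) → Im(α) and τ⁻¹ : τ(Im(β)) → Im(β) are completable in OP(X)). -/
import Mathlib


variable {X : Type*}

/-- The full transformation `f` is order-preserving on the subset `A`. -/
def OrdOn [LinearOrder X] (f : X → X) (A : Set X) : Prop :=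
  ∀ ⦃x y : X⦄, x ∈ A → y ∈ A → x ≤ y → f x ≤ f y

/-- `Y` is an ideal of the full transformation `f`. -/
def IsIdealFull [LinearOrder X] (f : X → X) (Y : Set X) : Prop :=
  Y.Nonempty ∧ OrdOn f Y ∧ OrdOn f Yᶜ ∧
    ∀ ⦃a b : X⦄, a ∈ Y → b ∈ Yᶜ → a ≤ b ∧ f b ≤ f a

/-- `f` is an orientation-preserving full transformation. -/
def IsOPFull [LinearOrder X] (f : X → X) : Prop := ∃ Y : Set X, IsIdealFull f Y

/-- Composition of an OP full map `α` with a map `h` that behaves like a partial OP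
map on the range of `α` (split by a set `A`) is OP. -/
lemma comp_op [LinearOrder X] {α h : X → X} (hα : IsOPFull α) (A : Set X)
    (hA : ∀ x y, x ∈ Set.range α → y ∈ Set.range α → x ∈ A → y ∈ A → x ≤ y → h x ≤ h y)
    (hB : ∀ x y, x ∈ Set.range α → y ∈ Set.range α → x ∉ A → y ∉ A → x ≤ y → h x ≤ h y)
    (hXc : ∀ b a, b ∈ Set.range α → a ∈ Set.range α → b ∉ A → a ∈ A → b ≤ a ∧ h a ≤ h b) :
    IsOPFull (h ∘ α) := by
  classical
  obtain ⟨Y, hYne, hY, hYc, hsep⟩ := hα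
  by_cases hc : ∃ x ∈ Y, α x ∉ A
  · obtain ⟨x₀, hx₀Y, hx₀A⟩ := hc
    have hYcA : ∀ u, u ∉ Y → α u ∉ A := by
      intro u hu hua
      have h1 := hsep hx₀Y hu
      have h2 := hXc (α x₀) (α u) ⟨x₀, rfl⟩ ⟨u, rfl⟩ hx₀A hua
      have he : α u = α x₀ := le_antisymm h1.2 h2.1
      exact absurd hua (he ▸ hx₀A)
    refine ⟨{x | x ∈ Y ∧ α x ∉ A}, ⟨x₀, hx₀Y, hx₀A⟩, ?_, ?_, ?_⟩
    · intro x y hx hy hxy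
      exact hB (α x) (α y) ⟨x, rfl⟩ ⟨y, rfl⟩ hx.2 hy.2 (hY hx.1 hy.1 hxy)
    · intro x y hx hy hxy
      simp only [Set.mem_compl_iff, Set.mem_setOf_eq, not_and, not_not] at hx hy
      by_cases hxY : x ∈ Y <;> by_cases hyY : y ∈ Y
      · exact hA _ _ ⟨x, rfl⟩ ⟨y, rfl⟩ (hx hxY) (hy hyY) (hY hxY hyY hxy)
      · exact (hXc (α y) (α x) ⟨y, rfl⟩ ⟨x, rfl⟩ (hYcA y hyY) (hx hxY)).2
      · obtain rfl := le_antisymm hxy (hsep hyY hxY).1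
        exact absurd hyY hxY
      · exact hB _ _ ⟨x, rfl⟩ ⟨y, rfl⟩ (hYcA x hxY) (hYcA y hyY) (hYc hxY hyY hxy)
    · intro a b ha hb
      simp only [Set.mem_setOf_eq] at ha
      simp only [Set.mem_compl_iff, Set.mem_setOf_eq, not_and, not_not] at hb
      by_cases hbY : b ∈ Y
      · have hbA : α b ∈ A := hb hbY
        have h2 := hXc (α a) (α b) ⟨a, rfl⟩ ⟨b, rfl⟩ ha.2 hbA
        have hab : a ≤ b := by
          by_contra hcon
          push_neg at hcon
          have h1 := hY hbY ha.1 hcon.le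
          have he : α a = α b := le_antisymm h2.1 h1
          exact (he ▸ ha.2) hbA
        exact ⟨hab, h2.2⟩
      · have h1 := hsep ha.1 hbY
        exact ⟨h1.1, hB (α b) (α a) ⟨b, rfl⟩ ⟨a, rfl⟩ (hYcA b hbY) ha.2 h1.2⟩
  · push_neg at hc
    obtain ⟨y₀, hy₀⟩ := hYne
    refine ⟨{x | x ∈ Y ∨ α x ∉ A}, ⟨y₀, Or.inl hy₀⟩, ?_, ?_, ?_⟩
    · intro x y hx hy hxy
      simp only [Set.mem_setOf_eq] at hx hy
      by_cases hxY : x ∈ Y <;> by_cases hyY : y ∈ Y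
      · exact hA _ _ ⟨x, rfl⟩ ⟨y, rfl⟩ (hc x hxY) (hc y hyY) (hY hxY hyY hxy)
      · have hyA : α y ∉ A := hy.resolve_left hyY
        exact (hXc (α y) (α x) ⟨y, rfl⟩ ⟨x, rfl⟩ hyA (hc x hxY)).2
      · obtain rfl := le_antisymm hxy (hsep hyY hxY).1
        exact absurd hyY hxY
      · have hxA : α x ∉ A := hx.resolve_left hxY
        have hyA : α y ∉ A := hy.resolve_left hyY
        exact hB _ _ ⟨x, rfl⟩ ⟨y, rfl⟩ hxA hyA (hYc hxY hyY hxy)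
    · intro x y hx hy hxy
      simp only [Set.mem_compl_iff, Set.mem_setOf_eq, not_or, not_not] at hx hy
      exact hA _ _ ⟨x, rfl⟩ ⟨y, rfl⟩ hx.2 hy.2 (hYc hx.1 hy.1 hxy)
    · intro a b ha hb
      simp only [Set.mem_setOf_eq] at ha
      simp only [Set.mem_compl_iff, Set.mem_setOf_eq, not_or, not_not] at hb
      by_cases haY : a ∈ Y
      · have h1 := hsep haY hb.1
        exact ⟨h1.1, hA _ _ ⟨b, rfl⟩ ⟨a, rfl⟩ hb.2 (hc a haY) h1.2⟩
      · have haA : α a ∉ A := ha.resolve_left haY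
        have h2 := hXc (α a) (α b) ⟨a, rfl⟩ ⟨b, rfl⟩ haA hb.2
        have hab : a ≤ b := by
          by_contra hcon
          push_neg at hcon
          have h1 := hYc hb.1 haY hcon.le
          have he : α a = α b := le_antisymm h2.1 h1
          exact (he ▸ haA) hb.2
        exact ⟨hab, h2.2⟩

/-- The backward construction: from `θ` with completable inverse `γ`, factor `α`
through `β`. -/
lemma factor_op [LinearOrder X] {α β : X → X} (hα : IsOPFull α) (hβ : IsOPFull β)
    (θ : X → X) (hm : Set.MapsTo θ (Set.range α) (Set.range β))
    (γ : X → X) (hγ : IsOPFull γ) (hγθ : ∀ a ∈ Set.range α, γ (θ a) = a) :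
    ∃ l g : X → X, IsOPFull l ∧ IsOPFull g ∧ α = g ∘ β ∘ l := by
  classical
  obtain ⟨Z, hZne, hZ, hZc, hZsep⟩ := id hγ
  -- step 1 : θ ∘ α is OP
  have hφ : IsOPFull (θ ∘ α) := by
    apply comp_op hα {y | θ y ∈ Z}
    · intro x y hx hy hxA hyA hxy
      rcases le_total (θ x) (θ y) with h | h
      · exact h
      · have h2 := hZ hyA hxA h
        rw [hγθ x hx, hγθ y hy] at h2
        obtain rfl := le_antisymm hxy h2
        exact le_refl _
    · intro x y hx hy hxA hyA hxy
      rcases le_total (θ x) (θ y) with h | h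
      · exact h
      · have h2 := hZc hyA hxA h
        rw [hγθ x hx, hγθ y hy] at h2
        obtain rfl := le_antisymm hxy h2
        exact le_refl _
    · intro b a hb ha hbA haA
      have h1 := hZsep haA hbA
      have h2 := h1.2
      rw [hγθ b hb, hγθ a ha] at h2
      exact ⟨h2, h1.1⟩
  -- step 2 : a partial-OP section of β
  obtain ⟨V, hVne, hV, hVc, hVsep⟩ := id hβ
  set s : X → X := fun y =>
    if h : ∃ v, v ∉ V ∧ β v = y then h.choose
    else if h' : ∃ v, β v = y then h'.choose else y with hs
  have key1 : ∀ y ∈ Set.range β, β (s y) = y := by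
    intro y hy
    by_cases h : ∃ v, v ∉ V ∧ β v = y
    · simp only [hs, dif_pos h]
      exact h.choose_spec.2
    · obtain ⟨v, hv⟩ := hy
      have h' : ∃ v, β v = y := ⟨v, hv⟩
      simp only [hs, dif_neg h, dif_pos h']
      exact h'.choose_spec
  have key2 : ∀ y, (∃ v, v ∉ V ∧ β v = y) → s y ∉ V := by
    intro y h
    simp only [hs, dif_pos h]
    exact h.choose_spec.1
  have key3 : ∀ y ∈ Set.range β, (¬ ∃ v, v ∉ V ∧ β v = y) → s y ∈ V := by
    intro y hy h
    obtain ⟨v, hv⟩ := hy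
    have h' : ∃ v, β v = y := ⟨v, hv⟩
    simp only [hs, dif_neg h, dif_pos h']
    by_contra hcon
    exact h ⟨h'.choose, hcon, h'.choose_spec⟩
  have hrange : ∀ y ∈ Set.range (θ ∘ α), y ∈ Set.range β := by
    rintro y ⟨x, rfl⟩
    exact hm ⟨x, rfl⟩
  -- step 3 : s ∘ (θ ∘ α) is OP
  have hl : IsOPFull (s ∘ (θ ∘ α)) := by
    apply comp_op hφ {y | ¬ ∃ v, v ∉ V ∧ β v = y}
    · intro x y hx hy hxA hyA hxy
      have hsx := key3 x (hrange x hx) hxA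
      have hsy := key3 y (hrange y hy) hyA
      rcases le_total (s x) (s y) with h | h
      · exact h
      · have h2 := hV hsy hsx h
        rw [key1 x (hrange x hx), key1 y (hrange y hy)] at h2
        obtain rfl := le_antisymm hxy h2
        exact le_refl _
    · intro x y hx hy hxA hyA hxy
      have hsx := key2 x (not_not.mp hxA)
      have hsy := key2 y (not_not.mp hyA)
      rcases le_total (s x) (s y) with h | h
      · exact h
      · have h2 := hVc hsy hsx h
        rw [key1 x (hrange x hx), key1 y (hrange y hy)] at h2
        obtain rfl := le_antisymm hxy h2
        exact le_refl _
    · intro b a hb ha hbA haA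
      have hsb := key2 b (not_not.mp hbA)
      have hsa := key3 a (hrange a ha) haA
      have h1 := hVsep hsa hsb
      have h2 := h1.2
      rw [key1 a (hrange a ha), key1 b (hrange b hb)] at h2
      exact ⟨h2, h1.1⟩
  refine ⟨s ∘ (θ ∘ α), γ, hl, hγ, ?_⟩
  funext x
  have h1 : β (s (θ (α x))) = θ (α x) := key1 _ (hm ⟨x, rfl⟩)
  simp only [Function.comp_apply, h1, hγθ (α x) ⟨x, rfl⟩]

/-- The forward construction: from a factorization `α = g ∘ β ∘ l`, produce `θ` with
completable inverse. -/
lemma fwd_op [LinearOrder X] {α β l g : X → X} (hg : IsOPFull g)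
    (heq : α = g ∘ β ∘ l) :
    ∃ θ : X → X, Set.MapsTo θ (Set.range α) (Set.range β) ∧
      Set.InjOn θ (Set.range α) ∧
      ∃ γ : X → X, IsOPFull γ ∧ ∀ a ∈ Set.range α, γ (θ a) = a := by
  classical
  set θ : X → X := fun a => if h : ∃ x, α x = a then β (l h.choose) else a with hθ
  have key : ∀ a ∈ Set.range α, g (θ a) = a := by
    intro a ha
    have h : ∃ x, α x = a := ha
    simp only [hθ, dif_pos h]
    calc g (β (l h.choose)) = (g ∘ β ∘ l) h.choose := rfl
      _ = α h.choose := by rw [← heq]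
      _ = a := h.choose_spec
  refine ⟨θ, ?_, ?_, g, hg, key⟩
  · rintro a ⟨x, rfl⟩
    have h : ∃ y, α y = α x := ⟨x, rfl⟩
    simp only [hθ, dif_pos h]
    exact ⟨l h.choose, rfl⟩
  · intro a ha b hb hab
    have := key a ha
    rw [hab, key b hb] at this
    exact this.symm

/-- Green's relation `J` in `OP(X)`: `α J β` (i.e. `α = λβγ` and `β = δαξ` for some
`λ, γ, δ, ξ ∈ OP(X)`, left factor applied first) iff there exist injective mappings
`θ : Im α → Im β` and `τ : Im β → Im α` admitting completable inverses in `OP(X)`. -/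
theorem stmt14 (X : Type*) [LinearOrder X] (α β : X → X)
    (hα : IsOPFull α) (hβ : IsOPFull β) :
    ((∃ l g : X → X, IsOPFull l ∧ IsOPFull g ∧ α = g ∘ β ∘ l) ∧
     (∃ d e : X → X, IsOPFull d ∧ IsOPFull e ∧ β = e ∘ α ∘ d)) ↔
    ((∃ θ : X → X, Set.MapsTo θ (Set.range α) (Set.range β) ∧
        Set.InjOn θ (Set.range α) ∧
        ∃ γ : X → X, IsOPFull γ ∧ ∀ a ∈ Set.range α, γ (θ a) = a) ∧
     (∃ τ : X → X, Set.MapsTo τ (Set.range β) (Set.range α) ∧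
        Set.InjOn τ (Set.range β) ∧
        ∃ δ : X → X, IsOPFull δ ∧ ∀ b ∈ Set.range β, δ (τ b) = b)) := by
  constructor
  · rintro ⟨⟨l, g, hl, hg, h1⟩, ⟨d, e, hd, he, h2⟩⟩
    exact ⟨fwd_op hg h1, fwd_op he h2⟩
  · rintro ⟨⟨θ, hm, _, γ, hγ, hγθ⟩, ⟨τ, hm', _, δ, hδ, hδτ⟩⟩
    exact ⟨factor_op hα hβ θ hm γ hγ hγθ, factor_op hβ hα τ hm' δ hδ hδτ⟩
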